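/- Fix K ≥ 1 and let, for each n, d = d_n be a real array on pairs of K-tuples of pairwise distinct elements of {1,…,n}, π a uniformly random permutation of {1,…,n}, and Γ = Σ_{i₁≠⋯≠i_K} d(i₁…i_K; π(i₁)…π(i_K)). (i) If (n)_K⁻² Σ_{i₁≠⋯≠i_K} Σ_{j₁≠⋯≠j_K} d̃(i₁…i_K; j₁…j_K)² = o(n) as n → ∞, then (n)_K⁻¹·(Γ − E[Γ]) → 0 in probability. (ii) In particular, for arrays a(i₁,…,i_K) and b(i₁,…,i_K) on K-tuples of distinct indices with centered versions ã, b̃, consider U_n = (n)_K⁻¹ Σ_{i₁≠⋯≠i_K} a(i₁,…,i_K)·b(π(i₁),…,π(i_K)); if n⁻¹·[(n)_K⁻¹ Σ ã(i₁,…,i_K)²]·[(n)_K⁻¹ Σ b̃(i₁,…,i_K)²] → 0, then U_n − E[U_n] → 0 in probability. -/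

import Mathlib

open MeasureTheory ProbabilityTheory Filter Matrix
open scoped NNReal Topology

noncomputable section

namespace QAPPaper

/-- Sum of `f i j` over the ordered off-diagonal pairs `i ≠ j` of `Fin n`. -/
def offSum (n : ℕ) (f : Fin n → Fin n → ℝ) : ℝ :=
  ∑ p ∈ (Finset.univ : Finset (Fin n × Fin n)).filter (fun p => p.1 ≠ p.2), f p.1 p.2

/-- Average `ā` of the `n(n-1)` off-diagonal entries. -/
def offAvg (n : ℕ) (f : Fin n → Fin n → ℝ) : ℝ :=
  ((n : ℝ) * ((n : ℝ) - 1))⁻¹ * offSum n f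

/-- The sample covariance `φ̂₀`. -/
def phiHat0 (n : ℕ) (a b : Fin n → Fin n → ℝ) : ℝ :=
  ((n : ℝ) * ((n : ℝ) - 1) - 1)⁻¹ *
    offSum n (fun i j => (a i j - offAvg n a) * (b i j - offAvg n b))

/-- The sample variance `η̂₂`. -/
def etaHat2 (n : ℕ) (a : Fin n → Fin n → ℝ) : ℝ :=
  ((n : ℝ) * ((n : ℝ) - 1) - 1)⁻¹ * offSum n (fun i j => (a i j - offAvg n a) ^ 2)

/-- The sample Pearson correlation `ρ̂`. -/
def rhoHat (n : ℕ) (a b : Fin n → Fin n → ℝ) : ℝ :=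
  phiHat0 n a b / (Real.sqrt (etaHat2 n a) * Real.sqrt (etaHat2 n b))

/-- The estimator `η̂₁,φ`. -/
def etaHat1phi (n : ℕ) (a b : Fin n → Fin n → ℝ) : ℝ :=
  (n : ℝ)⁻¹ * ∑ i : Fin n,
    (((n : ℝ) - 1)⁻¹ *
        ∑ j ∈ Finset.univ.erase i, (a i j - offAvg n a) * (b i j - offAvg n b)) ^ 2

/-- The variance estimator `v̂`. -/
def vHat (n : ℕ) (a b : Fin n → Fin n → ℝ) : ℝ :=
  4 * etaHat1phi n a b / (etaHat2 n a * etaHat2 n b)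

variable {X : Type*} [MeasurableSpace X]

/-- Mean `Φ₀` of a degree-2 kernel under two i.i.d. draws from `ν`. -/
def kMean (Φ : X → X → ℝ) (ν : Measure X) : ℝ := ∫ q, Φ q.1 q.2 ∂(ν.prod ν)

/-- First-order projection `Φ₁` of a degree-2 kernel. -/
def proj1 (Φ : X → X → ℝ) (ν : Measure X) (x : X) : ℝ := ∫ y, Φ x y ∂ν

/-- First-order variance `η₁,Φ = E[(Φ₁(X) − Φ₀)²]`. -/
def eta1 (Φ : X → X → ℝ) (ν : Measure X) : ℝ :=
  ∫ x, (proj1 Φ ν x - kMean Φ ν) ^ 2 ∂ν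

/-- Second-order variance `η₂,Φ = E[(Φ(X,X') − Φ₀)²]`. -/
def eta2 (Φ : X → X → ℝ) (ν : Measure X) : ℝ :=
  ∫ q, (Φ q.1 q.2 - kMean Φ ν) ^ 2 ∂(ν.prod ν)

variable {𝓡 𝓢 : Type*}

/-- The kernel `α` viewed as a kernel on pairs `(r, s)`. -/
def kerA (α : 𝓡 → 𝓡 → ℝ) : 𝓡 × 𝓢 → 𝓡 × 𝓢 → ℝ := fun x y => α x.1 y.1

/-- The kernel `β` viewed as a kernel on pairs `(r, s)`. -/
def kerB (β : 𝓢 → 𝓢 → ℝ) : 𝓡 × 𝓢 → 𝓡 × 𝓢 → ℝ := fun x y => β x.2 y.2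

/-- The covariance kernel `φ(r,s;r',s') = (α(r,r') − α₀)(β(s,s') − β₀)`. -/
def kerPhi [MeasurableSpace 𝓡] [MeasurableSpace 𝓢] (α : 𝓡 → 𝓡 → ℝ) (β : 𝓢 → 𝓢 → ℝ)
    (μ : Measure (𝓡 × 𝓢)) : 𝓡 × 𝓢 → 𝓡 × 𝓢 → ℝ :=
  fun x y => (α x.1 y.1 - kMean (kerA α) μ) * (β x.2 y.2 - kMean (kerB β) μ)

variable {Ω : Type*} [MeasurableSpace Ω]

/-- Dyadic data matrix: `a_ii = 0` and `a_ij = κ(X_i, X_j)` for `i ≠ j`. -/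
def dyad {𝓧 : Type*} (κ : 𝓧 → 𝓧 → ℝ) (Xs : ℕ → Ω → 𝓧) (n : ℕ) (ω : Ω) :
    Fin n → Fin n → ℝ :=
  fun i j => if i = j then 0 else κ (Xs i.val ω) (Xs j.val ω)

/-- CDF of the centered normal law `N(0, v)`. -/
def gaussCDF (v t : ℝ) : ℝ := ((gaussianReal 0 v.toNNReal) (Set.Iic t)).toReal

/-- Permutation CDF `L(t; stat^π)` of a statistic under the uniform distribution over
all permutations of `{1, …, n}`. -/
def permCDF (n : ℕ) (stat : Equiv.Perm (Fin n) → ℝ) (t : ℝ) : ℝ :=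
  ((n.factorial : ℝ))⁻¹ *
    ∑ π : Equiv.Perm (Fin n), Set.indicator (Set.Iic t) (fun _ => (1 : ℝ)) (stat π)


/-- Demeaned row-wise average `ā_i = (n−2)⁻¹ Σ_{j≠i} (a_ij − ā)`. -/
def rowAvg (n : ℕ) (a : Fin n → Fin n → ℝ) (i : Fin n) : ℝ :=
  ((n : ℝ) - 2)⁻¹ * ∑ j ∈ Finset.univ.erase i, (a i j - offAvg n a)

/-- Demeaned element `ã_ij = a_ij − ā_i − ā_j − ā`. -/
def tilde (n : ℕ) (a : Fin n → Fin n → ℝ) (i j : Fin n) : ℝ :=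
  a i j - rowAvg n a i - rowAvg n a j - offAvg n a

/-- The moment `m₁₂(a) = n⁻¹ Σ_i ā_i²`. -/
def m12 (n : ℕ) (a : Fin n → Fin n → ℝ) : ℝ :=
  (n : ℝ)⁻¹ * ∑ i, rowAvg n a i ^ 2

/-- The cross moment `m₁₂^{(kl)}(a) = n⁻¹ Σ_i ā_i^{(k)} ā_i^{(l)}`. -/
def m12c (n : ℕ) (a b : Fin n → Fin n → ℝ) : ℝ :=
  (n : ℝ)⁻¹ * ∑ i, rowAvg n a i * rowAvg n b i

/-- The moment `m₂₂(a) = (n(n−1))⁻¹ Σ_{i≠j} ã_ij²`. -/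
def m22 (n : ℕ) (a : Fin n → Fin n → ℝ) : ℝ :=
  ((n : ℝ) * ((n : ℝ) - 1))⁻¹ * offSum n (fun i j => tilde n a i j ^ 2)

/-- The double-indexed permutation statistic `W = (n(n−1))⁻¹ Σ_{i≠j} a_ij b_{π(i)π(j)}`. -/
def Wdips (n : ℕ) (a b : Fin n → Fin n → ℝ) (π : Equiv.Perm (Fin n)) : ℝ :=
  ((n : ℝ) * ((n : ℝ) - 1))⁻¹ * offSum n (fun i j => a i j * b (π i) (π j))

/-- The linear component `V = (2(n−2)/(n(n−1))) Σ_i ā_i b̄_{π(i)}`. -/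
def Vdips (n : ℕ) (a b : Fin n → Fin n → ℝ) (π : Equiv.Perm (Fin n)) : ℝ :=
  (2 * ((n : ℝ) - 2) / ((n : ℝ) * ((n : ℝ) - 1))) *
    ∑ i, rowAvg n a i * rowAvg n b (π i)

/-- The residual component `Δ = (n(n−1))⁻¹ Σ_{i≠j} ã_ij b̃_{π(i)π(j)}`. -/
def Ddips (n : ℕ) (a b : Fin n → Fin n → ℝ) (π : Equiv.Perm (Fin n)) : ℝ :=
  ((n : ℝ) * ((n : ℝ) - 1))⁻¹ * offSum n (fun i j => tilde n a i j * tilde n b (π i) (π j))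

/-- Expectation with respect to the uniform distribution on permutations. -/
def permE (n : ℕ) (f : Equiv.Perm (Fin n) → ℝ) : ℝ :=
  (n.factorial : ℝ)⁻¹ * ∑ π : Equiv.Perm (Fin n), f π

/-- Variance with respect to the uniform distribution on permutations. -/
def permVar (n : ℕ) (f : Equiv.Perm (Fin n) → ℝ) : ℝ :=
  permE n (fun π => (f π - permE n f) ^ 2)


/-- The `K`-tuples of pairwise distinct elements of `{1,…,n}`. -/
def injTuples (n K : ℕ) : Finset (Fin K → Fin n) :=
  Finset.univ.filter Function.Injective

/-- The `K`-indexed permutation statistic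
`Γ = Σ_{i₁≠⋯≠i_K} d(i₁…i_K; π(i₁)…π(i_K))`. -/
def gammaStat (n K : ℕ) (d : (Fin K → Fin n) → (Fin K → Fin n) → ℝ)
    (π : Equiv.Perm (Fin n)) : ℝ :=
  ∑ i ∈ injTuples n K, d i (fun s => π (i s))

/-- The doubly centered array `d̃`. -/
def dCenter (n K : ℕ) (d : (Fin K → Fin n) → (Fin K → Fin n) → ℝ)
    (i j : Fin K → Fin n) : ℝ :=
  d i j - (n.descFactorial K : ℝ)⁻¹ * ∑ i' ∈ injTuples n K, d i' j -
    (n.descFactorial K : ℝ)⁻¹ * ∑ j' ∈ injTuples n K, d i j' +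
    ((n.descFactorial K : ℝ)⁻¹) ^ 2 *
      ∑ i' ∈ injTuples n K, ∑ j' ∈ injTuples n K, d i' j'

/-- The centered array `ã`. -/
def aCenter (n K : ℕ) (a : (Fin K → Fin n) → ℝ) (i : Fin K → Fin n) : ℝ :=
  a i - (n.descFactorial K : ℝ)⁻¹ * ∑ i' ∈ injTuples n K, a i'

/-- The permutation statistic
`U_n = (n)_K⁻¹ Σ_{i₁≠⋯≠i_K} a(i₁,…,i_K) b(π(i₁),…,π(i_K))`. -/
def UnStat (n K : ℕ) (a b : (Fin K → Fin n) → ℝ) (π : Equiv.Perm (Fin n)) : ℝ :=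
  (n.descFactorial K : ℝ)⁻¹ * ∑ i ∈ injTuples n K, a i * b (fun s => π (i s))


section Helpers
open Finset




variable {n K : ℕ}

lemma mem_injTuples {i : Fin K → Fin n} : i ∈ injTuples n K ↔ Function.Injective i := by
  simp [injTuples]

lemma card_injTuples (n K : ℕ) : (injTuples n K).card = n.descFactorial K := by
  classical
  have : (injTuples n K).card = Fintype.card {f : Fin K → Fin n // Function.Injective f} :=
    (Fintype.card_subtype _).symm
  rw [this, Fintype.card_congr (Equiv.subtypeInjectiveEquivEmbedding (Fin K) (Fin n)),
    Fintype.card_embedding_eq, Fintype.card_fin, Fintype.card_fin]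

lemma card_fixing (T : Finset (Fin n)) :
    (Finset.univ.filter (fun σ : Equiv.Perm (Fin n) => ∀ x ∈ T, σ x = x)).card
      = (n - T.card).factorial := by
  classical
  have h1 : (Finset.univ.filter (fun σ : Equiv.Perm (Fin n) => ∀ x ∈ T, σ x = x)).card
      = Fintype.card {σ : Equiv.Perm (Fin n) // ∀ x ∈ T, σ x = x} :=
    (Fintype.card_subtype _).symm
  rw [h1]
  have e1 : Equiv.Perm {x : Fin n // x ∉ T} ≃ {σ : Equiv.Perm (Fin n) // ∀ x ∈ T, σ x = x} :=
    (Equiv.Perm.subtypeEquivSubtypePerm (fun x => x ∉ T)).trans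
      (Equiv.subtypeEquiv (Equiv.refl _) (by
        intro σ
        constructor
        · intro h x hx; exact h x (not_not_intro hx)
        · intro h a ha; exact h a (not_not.mp ha)))
  rw [← Fintype.card_congr e1, Fintype.card_perm]
  congr 1
  rw [Fintype.card_subtype_compl, Fintype.card_fin, Fintype.card_coe]

lemma exists_perm_comp {i j : Fin K → Fin n} (hi : Function.Injective i)
    (hj : Function.Injective j) : ∃ σ : Equiv.Perm (Fin n), ∀ s, σ (i s) = j s := by
  classical
  let e : {x // x ∈ Set.range i} ≃ {x // x ∈ Set.range j} :=
    (Equiv.ofInjective i hi).symm.trans (Equiv.ofInjective j hj)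
  refine ⟨e.extendSubtype, fun s => ?_⟩
  rw [Equiv.extendSubtype_apply_of_mem e (i s) ⟨s, rfl⟩]
  have h1 : (Equiv.ofInjective i hi).symm ⟨i s, ⟨s, rfl⟩⟩ = s := by
    apply (Equiv.ofInjective i hi).injective
    simp [Equiv.apply_ofInjective_symm]
  show ((Equiv.ofInjective j hj) ((Equiv.ofInjective i hi).symm ⟨i s, ⟨s, rfl⟩⟩) : Fin n) = j s
  rw [h1, Equiv.ofInjective_apply]

lemma card_fiber {i j : Fin K → Fin n} (hi : Function.Injective i)
    (hj : Function.Injective j) :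
    (Finset.univ.filter (fun π : Equiv.Perm (Fin n) => (fun s => π (i s)) = j)).card
      = (n - K).factorial := by
  classical
  obtain ⟨σ₀, hσ₀⟩ := exists_perm_comp hi hj
  have key : (Finset.univ.filter (fun π : Equiv.Perm (Fin n) => (fun s => π (i s)) = j)).card
      = (Finset.univ.filter
          (fun σ : Equiv.Perm (Fin n) => ∀ x ∈ Finset.univ.image i, σ x = x)).card := by
    apply Finset.card_bij (fun π _ => σ₀⁻¹ * π)
    · intro π hπ
      simp only [Finset.mem_filter, Finset.mem_univ, true_and] at hπ ⊢
      intro x hx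
      obtain ⟨s, _, rfl⟩ := Finset.mem_image.mp hx
      have : π (i s) = j s := congrFun hπ s
      simp [Equiv.Perm.mul_apply, this, ← hσ₀ s]
    · intro π₁ h₁ π₂ h₂ h
      exact mul_left_cancel h
    · intro σ hσ
      simp only [Finset.mem_filter, Finset.mem_univ, true_and] at hσ
      refine ⟨σ₀ * σ, ?_, by group⟩
      simp only [Finset.mem_filter, Finset.mem_univ, true_and]
      funext s
      have : σ (i s) = i s := hσ (i s) (Finset.mem_image_of_mem i (Finset.mem_univ s))
      simp [Equiv.Perm.mul_apply, this, hσ₀ s]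
  rw [key, card_fixing, Finset.card_image_of_injective _ hi, Finset.card_univ, Fintype.card_fin]

lemma sum_perm_comp {i : Fin K → Fin n} (hi : Function.Injective i)
    (f : (Fin K → Fin n) → ℝ) :
    ∑ π : Equiv.Perm (Fin n), f (fun s => π (i s))
      = ((n - K).factorial : ℝ) * ∑ j ∈ injTuples n K, f j := by
  classical
  rw [← Finset.sum_fiberwise_of_maps_to
      (g := fun π : Equiv.Perm (Fin n) => fun s => π (i s)) (t := injTuples n K)
      (fun π _ => mem_injTuples.2 (fun a b hab => hi (π.injective hab))) (fun π => f (fun s => π (i s)))]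
  rw [Finset.mul_sum]
  refine Finset.sum_congr rfl fun j hj => ?_
  have : ∀ π ∈ Finset.univ.filter
      (fun π : Equiv.Perm (Fin n) => (fun s => π (i s)) = j), f (fun s => π (i s)) = f j := by
    intro π hπ
    simp only [Finset.mem_filter] at hπ
    rw [hπ.2]
  rw [Finset.sum_congr rfl this, Finset.sum_const, card_fiber hi (mem_injTuples.1 hj),
    nsmul_eq_mul]

lemma sum_injTuples_perm (π : Equiv.Perm (Fin n)) (g : (Fin K → Fin n) → ℝ) :
    ∑ i ∈ injTuples n K, g (fun s => π (i s)) = ∑ j ∈ injTuples n K, g j := by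
  apply Finset.sum_nbij' (fun i => fun s => π (i s)) (fun j => fun s => π.symm (j s))
  · intro i hi
    exact mem_injTuples.2 fun a b hab => (mem_injTuples.1 hi) (π.injective hab)
  · intro j hj
    exact mem_injTuples.2 fun a b hab => (mem_injTuples.1 hj) (π.symm.injective hab)
  · intro i _; funext s; simp
  · intro j _; funext s; simp
  · intro i _; rfl







lemma addCases_aux (z : Fin (K + K)) :
    (∃ s, z = Fin.castAdd K s) ∨ (∃ s, z = Fin.natAdd K s) :=
  Fin.addCases (fun s => Or.inl ⟨s, rfl⟩) (fun s => Or.inr ⟨s, rfl⟩) z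

lemma natAdd_inj {a b : Fin K} (h : Fin.natAdd K a = Fin.natAdd K b) : a = b := by
  have := congrArg Fin.val h
  simp only [Fin.coe_natAdd] at this
  exact Fin.ext (by omega)

lemma castAdd_ne_natAdd (s t : Fin K) : Fin.castAdd K s ≠ Fin.natAdd K t := by
  intro h
  have := congrArg Fin.val h
  simp only [Fin.coe_castAdd, Fin.coe_natAdd] at this
  omega

lemma append_injective {i i' : Fin K → Fin n} (hi : Function.Injective i)
    (hi' : Function.Injective i') (hd : ∀ s t, i s ≠ i' t) :
    Function.Injective (Fin.append i i') := by
  intro x y hxy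
  rcases addCases_aux x with ⟨s, rfl⟩ | ⟨s, rfl⟩ <;>
    rcases addCases_aux y with ⟨t, rfl⟩ | ⟨t, rfl⟩
  · rw [Fin.append_left, Fin.append_left] at hxy
    rw [hi hxy]
  · rw [Fin.append_left, Fin.append_right] at hxy
    exact absurd hxy (hd s t)
  · rw [Fin.append_right, Fin.append_left] at hxy
    exact absurd hxy.symm (hd t s)
  · rw [Fin.append_right, Fin.append_right] at hxy
    rw [hi' hxy]

/-- Sum over injective `2K`-tuples equals sum over pairs of disjoint injective `K`-tuples. -/
lemma sum_append (F : (Fin (K + K) → Fin n) → ℝ) :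
    ∑ w ∈ injTuples n (K + K), F w
      = ∑ p ∈ ((injTuples n K) ×ˢ (injTuples n K)).filter
          (fun p => ∀ s t, p.1 s ≠ p.2 t), F (Fin.append p.1 p.2) := by
  classical
  apply Finset.sum_nbij'
    (fun w => ((fun s => w (Fin.castAdd K s)), (fun s => w (Fin.natAdd K s))))
    (fun p => Fin.append p.1 p.2)
  · intro w hw
    have hwi := mem_injTuples.1 hw
    simp only [Finset.mem_filter, Finset.mem_product]
    refine ⟨⟨mem_injTuples.2 fun a b hab => ?_, mem_injTuples.2 fun a b hab => ?_⟩,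
      fun s t hst => ?_⟩
    · exact Fin.castAdd_injective _ _ (hwi hab)
    · exact natAdd_inj (hwi hab)
    · exact castAdd_ne_natAdd s t (hwi hst)
  · intro p hp
    simp only [Finset.mem_filter, Finset.mem_product] at hp
    exact mem_injTuples.2
      (append_injective (mem_injTuples.1 hp.1.1) (mem_injTuples.1 hp.1.2) hp.2)
  · intro w _
    exact Fin.append_castAdd_natAdd
  · intro p _
    refine Prod.ext (funext fun s => ?_) (funext fun s => ?_)
    · exact Fin.append_left _ _ s
    · exact Fin.append_right _ _ s
  · intro w _
    rw [Fin.append_castAdd_natAdd]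

lemma card_pin_le (s : Fin K) (c : Fin n) :
    (Finset.univ.filter (fun f : Fin K → Fin n => f s = c)).card ≤ n ^ (K - 1) := by
  classical
  have hinj : Set.InjOn (fun f : Fin K → Fin n => (fun x : {x : Fin K // x ≠ s} => f x.val))
      (Finset.univ.filter (fun f : Fin K → Fin n => f s = c)) := by
    intro f₁ h₁ f₂ h₂ h
    simp only [Finset.coe_filter, Set.mem_setOf_eq] at h₁ h₂
    funext x
    by_cases hx : x = s
    · rw [hx, h₁.2, h₂.2]
    · exact congrFun h ⟨x, hx⟩
  have := Finset.card_le_card_of_injOn _ (fun f _ => Finset.mem_univ _) hinj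
  refine this.trans ?_
  rw [Finset.card_univ, Fintype.card_fun, Fintype.card_fin]
  have hc : Fintype.card {x : Fin K // x ≠ s} = K - 1 := by
    rw [Fintype.card_subtype_compl, Fintype.card_fin, Fintype.card_subtype_eq]
  rw [hc]

lemma card_overlap_le₁ (g : Fin K → Fin n) :
    ((injTuples n K).filter (fun f => ∃ s t, f s = g t)).card ≤ K ^ 2 * n ^ (K - 1) := by
  classical
  have hsub : (injTuples n K).filter (fun f => ∃ s t, f s = g t)
      ⊆ (Finset.univ : Finset (Fin K × Fin K)).biUnion
          (fun st => Finset.univ.filter (fun f : Fin K → Fin n => f st.1 = g st.2)) := by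
    intro f hf
    simp only [Finset.mem_filter, Finset.mem_biUnion] at hf ⊢
    obtain ⟨_, s, t, hst⟩ := hf
    exact ⟨(s, t), Finset.mem_univ _, by simp [hst]⟩
  refine (Finset.card_le_card hsub).trans ((Finset.card_biUnion_le).trans ?_)
  refine (Finset.sum_le_card_nsmul _ _ (n ^ (K - 1)) (fun st _ => card_pin_le st.1 (g st.2))).trans ?_
  rw [Finset.card_univ, Fintype.card_prod, Fintype.card_fin, smul_eq_mul, pow_two]

lemma card_overlap_le₂ (g : Fin K → Fin n) :
    ((injTuples n K).filter (fun f => ∃ s t, g s = f t)).card ≤ K ^ 2 * n ^ (K - 1) := by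
  classical
  have : ((injTuples n K).filter (fun f => ∃ s t, g s = f t))
      = ((injTuples n K).filter (fun f => ∃ s t, f s = g t)) := by
    apply Finset.filter_congr
    intro f _
    constructor
    · rintro ⟨s, t, h⟩; exact ⟨t, s, h.symm⟩
    · rintro ⟨s, t, h⟩; exact ⟨t, s, h.symm⟩
  rw [this]
  exact card_overlap_le₁ g







section OverlapSums

/-- First-coordinate overlap sum bound. -/
lemma sum_overlap_fst_le (g : (Fin K → Fin n) → ℝ) (hg : ∀ j, 0 ≤ g j) :
    ∑ p ∈ ((injTuples n K) ×ˢ (injTuples n K)).filter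
        (fun p => ¬ ∀ s t, p.1 s ≠ p.2 t), g p.1
      ≤ ((K ^ 2 * n ^ (K - 1) : ℕ) : ℝ) * ∑ j ∈ injTuples n K, g j := by
  classical
  rw [Finset.sum_filter, Finset.sum_product]
  have hinner : ∀ i ∈ injTuples n K,
      (∑ i' ∈ injTuples n K, if ¬ ∀ s t, i s ≠ i' t then g i else 0)
        ≤ ((K ^ 2 * n ^ (K - 1) : ℕ) : ℝ) * g i := by
    intro i _
    rw [← Finset.sum_filter, Finset.sum_const, nsmul_eq_mul]
    have hcard : ((injTuples n K).filter (fun i' => ¬ ∀ s t, i s ≠ i' t)).card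
        ≤ K ^ 2 * n ^ (K - 1) := by
      have heq : ((injTuples n K).filter (fun i' => ¬ ∀ s t, i s ≠ i' t))
          = ((injTuples n K).filter (fun i' => ∃ s t, i s = i' t)) := by
        apply Finset.filter_congr
        intro f _
        push_neg
        rfl
      rw [heq]
      exact card_overlap_le₂ i
    exact mul_le_mul_of_nonneg_right (by exact_mod_cast hcard) (hg i)
  calc ∑ i ∈ injTuples n K, ∑ i' ∈ injTuples n K, (if ¬ ∀ s t, i s ≠ i' t then g i else 0)
      ≤ ∑ i ∈ injTuples n K, ((K ^ 2 * n ^ (K - 1) : ℕ) : ℝ) * g i :=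
        Finset.sum_le_sum hinner
    _ = _ := by rw [Finset.mul_sum]

/-- Second-coordinate overlap sum bound. -/
lemma sum_overlap_snd_le (g : (Fin K → Fin n) → ℝ) (hg : ∀ j, 0 ≤ g j) :
    ∑ p ∈ ((injTuples n K) ×ˢ (injTuples n K)).filter
        (fun p => ¬ ∀ s t, p.1 s ≠ p.2 t), g p.2
      ≤ ((K ^ 2 * n ^ (K - 1) : ℕ) : ℝ) * ∑ j ∈ injTuples n K, g j := by
  classical
  rw [Finset.sum_filter, Finset.sum_product_right]
  have hinner : ∀ i' ∈ injTuples n K,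
      (∑ i ∈ injTuples n K, if ¬ ∀ s t, i s ≠ i' t then g i' else 0)
        ≤ ((K ^ 2 * n ^ (K - 1) : ℕ) : ℝ) * g i' := by
    intro i' _
    rw [← Finset.sum_filter, Finset.sum_const, nsmul_eq_mul]
    have hcard : ((injTuples n K).filter (fun i => ¬ ∀ s t, i s ≠ i' t)).card
        ≤ K ^ 2 * n ^ (K - 1) := by
      have heq : ((injTuples n K).filter (fun i => ¬ ∀ s t, i s ≠ i' t))
          = ((injTuples n K).filter (fun i => ∃ s t, i s = i' t)) := by
        apply Finset.filter_congr
        intro f _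
        push_neg
        rfl
      rw [heq]
      exact card_overlap_le₁ i'
    exact mul_le_mul_of_nonneg_right (by exact_mod_cast hcard) (hg i')
  calc ∑ i' ∈ injTuples n K, ∑ i ∈ injTuples n K, (if ¬ ∀ s t, i s ≠ i' t then g i' else 0)
      ≤ ∑ i' ∈ injTuples n K, ((K ^ 2 * n ^ (K - 1) : ℕ) : ℝ) * g i' :=
        Finset.sum_le_sum hinner
    _ = _ := by rw [Finset.mul_sum]

end OverlapSums

/-- Core second-moment bound for centered `K`-indexed permutation statistics. -/
theorem var_bound (d : (Fin K → Fin n) → (Fin K → Fin n) → ℝ)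
    (hrow : ∀ i, ∑ j ∈ injTuples n K, d i j = 0) :
    ∑ π : Equiv.Perm (Fin n),
        (∑ i ∈ injTuples n K, d i (fun s => π (i s))) ^ 2
      ≤ (((n - K).factorial : ℝ)
          + ((n - 2 * K).factorial : ℝ) * (n.descFactorial K : ℝ))
        * ((K ^ 2 * n ^ (K - 1) : ℕ) : ℝ)
        * ∑ i ∈ injTuples n K, ∑ j ∈ injTuples n K, (d i j) ^ 2 := by
  classical
  set I := injTuples n K with hI
  set B : ℝ := ((K ^ 2 * n ^ (K - 1) : ℕ) : ℝ) with hB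
  set S : ℝ := ∑ i ∈ I, ∑ j ∈ I, (d i j) ^ 2 with hS
  have hS0 : 0 ≤ S := Finset.sum_nonneg fun i _ => Finset.sum_nonneg fun j _ => sq_nonneg _
  set R : (Fin K → Fin n) → ℝ := fun i => ∑ j ∈ I, (d i j) ^ 2 with hR
  have hR0 : ∀ i, 0 ≤ R i := fun i => Finset.sum_nonneg fun j _ => sq_nonneg _
  set Cb : (Fin K → Fin n) → ℝ := fun j => ∑ i ∈ I, (d i j) ^ 2 with hCb
  have hCb0 : ∀ j, 0 ≤ Cb j := fun j => Finset.sum_nonneg fun i _ => sq_nonneg _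
  have hSR : S = ∑ i ∈ I, R i := rfl
  have hSC : S = ∑ j ∈ I, Cb j := Finset.sum_comm
  set T : (Fin K → Fin n) × (Fin K → Fin n) → ℝ :=
    fun p => ∑ π : Equiv.Perm (Fin n),
      d p.1 (fun s => π (p.1 s)) * d p.2 (fun s => π (p.2 s)) with hT
  set c : (Fin K → Fin n) × (Fin K → Fin n) → Prop := fun p => ∀ s t, p.1 s ≠ p.2 t with hc
  -- Step A
  have stepA : ∑ π : Equiv.Perm (Fin n), (∑ i ∈ I, d i (fun s => π (i s))) ^ 2
      = ∑ p ∈ I ×ˢ I, T p := by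
    have h1 : ∀ π : Equiv.Perm (Fin n), (∑ i ∈ I, d i (fun s => π (i s))) ^ 2
        = ∑ p ∈ I ×ˢ I, d p.1 (fun s => π (p.1 s)) * d p.2 (fun s => π (p.2 s)) := by
      intro π
      rw [sq, Finset.sum_mul_sum, Finset.sum_product]
    rw [Finset.sum_congr rfl fun π _ => h1 π, Finset.sum_comm]
  -- split
  have stepB : ∑ p ∈ I ×ˢ I, T p
      = (∑ p ∈ (I ×ˢ I).filter c, T p) + ∑ p ∈ (I ×ˢ I).filter (fun p => ¬ c p), T p :=
    (Finset.sum_filter_add_sum_filter_not _ _ _).symm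
  -- overlap part
  have Tbound : ∀ p ∈ I ×ˢ I, T p ≤ ((n - K).factorial : ℝ) * ((R p.1 + R p.2) / 2) := by
    intro p hp
    obtain ⟨hp1, hp2⟩ := Finset.mem_product.mp hp
    have h1 : T p ≤ ∑ π : Equiv.Perm (Fin n),
        ((d p.1 (fun s => π (p.1 s))) ^ 2 + (d p.2 (fun s => π (p.2 s))) ^ 2) / 2 := by
      apply Finset.sum_le_sum
      intro π _
      nlinarith [sq_nonneg (d p.1 (fun s => π (p.1 s)) - d p.2 (fun s => π (p.2 s)))]
    have h2 : ∑ π : Equiv.Perm (Fin n),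
        ((d p.1 (fun s => π (p.1 s))) ^ 2 + (d p.2 (fun s => π (p.2 s))) ^ 2) / 2
        = ((n - K).factorial : ℝ) * ((R p.1 + R p.2) / 2) := by
      rw [← Finset.sum_div, Finset.sum_add_distrib,
        sum_perm_comp (mem_injTuples.1 hp1) (fun j => (d p.1 j) ^ 2),
        sum_perm_comp (mem_injTuples.1 hp2) (fun j => (d p.2 j) ^ 2)]
      ring
    exact h1.trans h2.le
  have stepOv : ∑ p ∈ (I ×ˢ I).filter (fun p => ¬ c p), T p
      ≤ ((n - K).factorial : ℝ) * B * S := by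
    have h1 : ∑ p ∈ (I ×ˢ I).filter (fun p => ¬ c p), T p
        ≤ ∑ p ∈ (I ×ˢ I).filter (fun p => ¬ c p),
            ((n - K).factorial : ℝ) * ((R p.1 + R p.2) / 2) :=
      Finset.sum_le_sum fun p hp => Tbound p (Finset.mem_of_mem_filter p hp)
    have h2 : ∑ p ∈ (I ×ˢ I).filter (fun p => ¬ c p),
          ((n - K).factorial : ℝ) * ((R p.1 + R p.2) / 2)
        = ((n - K).factorial : ℝ) / 2 *
            ((∑ p ∈ (I ×ˢ I).filter (fun p => ¬ c p), R p.1)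
              + ∑ p ∈ (I ×ˢ I).filter (fun p => ¬ c p), R p.2) := by
      rw [← Finset.sum_add_distrib, Finset.mul_sum]
      apply Finset.sum_congr rfl
      intro p _
      ring
    have h3 := sum_overlap_fst_le (n := n) (K := K) R hR0
    have h4 := sum_overlap_snd_le (n := n) (K := K) R hR0
    have hfac : (0:ℝ) ≤ ((n - K).factorial : ℝ) := Nat.cast_nonneg _
    calc ∑ p ∈ (I ×ˢ I).filter (fun p => ¬ c p), T p
        ≤ ((n - K).factorial : ℝ) / 2 *
            ((∑ p ∈ (I ×ˢ I).filter (fun p => ¬ c p), R p.1)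
              + ∑ p ∈ (I ×ˢ I).filter (fun p => ¬ c p), R p.2) := h1.trans h2.le
      _ ≤ ((n - K).factorial : ℝ) / 2 * (B * S + B * S) := by
          apply mul_le_mul_of_nonneg_left _ (by positivity)
          rw [← hSR] at h3 h4
          exact add_le_add h3 h4
      _ = ((n - K).factorial : ℝ) * B * S := by ring
  -- disjoint part
  have hTDis : ∀ p ∈ (I ×ˢ I).filter c,
      T p = ((n - 2 * K).factorial : ℝ) *
        ∑ q ∈ (I ×ˢ I).filter c, d p.1 q.1 * d p.2 q.2 := by
    intro p hp
    rw [Finset.mem_filter, Finset.mem_product] at hp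
    obtain ⟨⟨hp1, hp2⟩, hpd⟩ := hp
    have hw : Function.Injective (Fin.append p.1 p.2) :=
      append_injective (mem_injTuples.1 hp1) (mem_injTuples.1 hp2) hpd
    have key : ∀ π : Equiv.Perm (Fin n),
        d p.1 (fun s => π (p.1 s)) * d p.2 (fun s => π (p.2 s))
          = (fun w : Fin (K + K) → Fin n =>
              d p.1 (fun s => w (Fin.castAdd K s)) * d p.2 (fun s => w (Fin.natAdd K s)))
            (fun u => π (Fin.append p.1 p.2 u)) := by
      intro π
      simp only
      congr 1
      · congr 1
        funext s
        rw [Fin.append_left]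
      · congr 1
        funext s
        rw [Fin.append_right]
    have h2 : T p = ((n - (K + K)).factorial : ℝ) *
        ∑ w ∈ injTuples n (K + K),
          d p.1 (fun s => w (Fin.castAdd K s)) * d p.2 (fun s => w (Fin.natAdd K s)) := by
      rw [hT]
      simp only
      rw [Finset.sum_congr rfl fun π _ => key π]
      exact sum_perm_comp hw
        (fun w => d p.1 (fun s => w (Fin.castAdd K s)) * d p.2 (fun s => w (Fin.natAdd K s)))
    rw [h2, sum_append]
    have h3 : ∀ q ∈ (I ×ˢ I).filter c,
        d p.1 (fun s => Fin.append q.1 q.2 (Fin.castAdd K s))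
          * d p.2 (fun s => Fin.append q.1 q.2 (Fin.natAdd K s))
        = d p.1 q.1 * d p.2 q.2 := by
      intro q _
      congr 1
      · congr 1
        funext s
        rw [Fin.append_left]
      · congr 1
        funext s
        rw [Fin.append_right]
    rw [Finset.sum_congr rfl h3]
    norm_num [two_mul]
  have hcent : ∀ p : (Fin K → Fin n) × (Fin K → Fin n),
      ∑ q ∈ I ×ˢ I, d p.1 q.1 * d p.2 q.2 = 0 := by
    intro p
    rw [Finset.sum_product, ← Finset.sum_mul_sum, hrow p.1, zero_mul]
  have hneg : ∀ p : (Fin K → Fin n) × (Fin K → Fin n),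
      ∑ q ∈ (I ×ˢ I).filter c, d p.1 q.1 * d p.2 q.2
        = - ∑ q ∈ (I ×ˢ I).filter (fun q => ¬ c q), d p.1 q.1 * d p.2 q.2 := by
    intro p
    have := Finset.sum_filter_add_sum_filter_not (I ×ˢ I) c (fun q => d p.1 q.1 * d p.2 q.2)
    rw [hcent p] at this
    linarith
  have stepDis : ∑ p ∈ (I ×ˢ I).filter c, T p
      ≤ ((n - 2 * K).factorial : ℝ) * (n.descFactorial K : ℝ) * B * S := by
    have h1 : ∑ p ∈ (I ×ˢ I).filter c, T p
        ≤ ((n - 2 * K).factorial : ℝ) *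
            ∑ p ∈ I ×ˢ I, ∑ q ∈ (I ×ˢ I).filter (fun q => ¬ c q),
              ((d p.1 q.1) ^ 2 + (d p.2 q.2) ^ 2) / 2 := by
      rw [Finset.sum_congr rfl hTDis, ← Finset.mul_sum]
      apply mul_le_mul_of_nonneg_left _ (Nat.cast_nonneg _)
      calc ∑ p ∈ (I ×ˢ I).filter c, ∑ q ∈ (I ×ˢ I).filter c, d p.1 q.1 * d p.2 q.2
          = ∑ p ∈ (I ×ˢ I).filter c,
              - ∑ q ∈ (I ×ˢ I).filter (fun q => ¬ c q), d p.1 q.1 * d p.2 q.2 :=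
            Finset.sum_congr rfl fun p _ => hneg p
        _ ≤ ∑ p ∈ (I ×ˢ I).filter c, ∑ q ∈ (I ×ˢ I).filter (fun q => ¬ c q),
              ((d p.1 q.1) ^ 2 + (d p.2 q.2) ^ 2) / 2 := by
            apply Finset.sum_le_sum
            intro p _
            rw [← Finset.sum_neg_distrib]
            apply Finset.sum_le_sum
            intro q _
            nlinarith [sq_nonneg (d p.1 q.1 + d p.2 q.2)]
        _ ≤ ∑ p ∈ I ×ˢ I, ∑ q ∈ (I ×ˢ I).filter (fun q => ¬ c q),
              ((d p.1 q.1) ^ 2 + (d p.2 q.2) ^ 2) / 2 := by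
            apply Finset.sum_le_sum_of_subset_of_nonneg (Finset.filter_subset _ _)
            intro p _ _
            exact Finset.sum_nonneg fun q _ => by positivity
    have h2 : ∑ p ∈ I ×ˢ I, ∑ q ∈ (I ×ˢ I).filter (fun q => ¬ c q),
          ((d p.1 q.1) ^ 2 + (d p.2 q.2) ^ 2) / 2
        = ∑ q ∈ (I ×ˢ I).filter (fun q => ¬ c q),
            (n.descFactorial K : ℝ) * ((Cb q.1 + Cb q.2) / 2) := by
      rw [Finset.sum_comm]
      apply Finset.sum_congr rfl
      intro q _
      have e1 : ∑ p ∈ I ×ˢ I, ((d p.1 q.1) ^ 2 + (d p.2 q.2) ^ 2) / 2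
          = ((∑ p ∈ I ×ˢ I, (d p.1 q.1) ^ 2) + ∑ p ∈ I ×ˢ I, (d p.2 q.2) ^ 2) / 2 := by
        rw [← Finset.sum_add_distrib, Finset.sum_div]
      have hcardI : ((I.card : ℕ) : ℝ) = (n.descFactorial K : ℝ) := by
        rw [hI, card_injTuples]
      have e2 : ∑ p ∈ I ×ˢ I, (d p.1 q.1) ^ 2 = (n.descFactorial K : ℝ) * Cb q.1 := by
        rw [Finset.sum_product]
        simp only [Finset.sum_const, nsmul_eq_mul]
        rw [← Finset.mul_sum, hcardI]
      have e3 : ∑ p ∈ I ×ˢ I, (d p.2 q.2) ^ 2 = (n.descFactorial K : ℝ) * Cb q.2 := by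
        rw [Finset.sum_product_right]
        simp only [Finset.sum_const, nsmul_eq_mul]
        rw [← Finset.mul_sum, hcardI]
      rw [e1, e2, e3]
      ring
    have h3 := sum_overlap_fst_le (n := n) (K := K) Cb hCb0
    have h4 := sum_overlap_snd_le (n := n) (K := K) Cb hCb0
    rw [← hSC] at h3 h4
    have h5 : ∑ q ∈ (I ×ˢ I).filter (fun q => ¬ c q),
          (n.descFactorial K : ℝ) * ((Cb q.1 + Cb q.2) / 2)
        ≤ (n.descFactorial K : ℝ) * B * S := by
      have : ∑ q ∈ (I ×ˢ I).filter (fun q => ¬ c q),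
            (n.descFactorial K : ℝ) * ((Cb q.1 + Cb q.2) / 2)
          = (n.descFactorial K : ℝ) / 2 *
              ((∑ q ∈ (I ×ˢ I).filter (fun q => ¬ c q), Cb q.1)
                + ∑ q ∈ (I ×ˢ I).filter (fun q => ¬ c q), Cb q.2) := by
        rw [← Finset.sum_add_distrib, Finset.mul_sum]
        apply Finset.sum_congr rfl
        intro q _
        ring
      rw [this]
      calc (n.descFactorial K : ℝ) / 2 *
            ((∑ q ∈ (I ×ˢ I).filter (fun q => ¬ c q), Cb q.1)
              + ∑ q ∈ (I ×ˢ I).filter (fun q => ¬ c q), Cb q.2)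
          ≤ (n.descFactorial K : ℝ) / 2 * (B * S + B * S) := by
            apply mul_le_mul_of_nonneg_left (add_le_add h3 h4) (by positivity)
        _ = (n.descFactorial K : ℝ) * B * S := by ring
    calc ∑ p ∈ (I ×ˢ I).filter c, T p
        ≤ ((n - 2 * K).factorial : ℝ) *
            ∑ q ∈ (I ×ˢ I).filter (fun q => ¬ c q),
              (n.descFactorial K : ℝ) * ((Cb q.1 + Cb q.2) / 2) := by
          rw [← h2]; exact h1
      _ ≤ ((n - 2 * K).factorial : ℝ) * ((n.descFactorial K : ℝ) * B * S) :=
          mul_le_mul_of_nonneg_left h5 (Nat.cast_nonneg _)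
      _ = ((n - 2 * K).factorial : ℝ) * (n.descFactorial K : ℝ) * B * S := by ring
  rw [stepA, stepB]
  calc (∑ p ∈ (I ×ˢ I).filter c, T p) + ∑ p ∈ (I ×ˢ I).filter (fun p => ¬ c p), T p
      ≤ ((n - 2 * K).factorial : ℝ) * (n.descFactorial K : ℝ) * B * S
          + ((n - K).factorial : ℝ) * B * S := add_le_add stepDis stepOv
    _ = (((n - K).factorial : ℝ)
          + ((n - 2 * K).factorial : ℝ) * (n.descFactorial K : ℝ)) * B * S := by ring













-- permE basics
lemma permE_nonneg {f : Equiv.Perm (Fin n) → ℝ} (hf : ∀ π, 0 ≤ f π) : 0 ≤ permE n f :=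
  mul_nonneg (by positivity) (Finset.sum_nonneg fun π _ => hf π)

lemma permE_mono {f g : Equiv.Perm (Fin n) → ℝ} (h : ∀ π, f π ≤ g π) :
    permE n f ≤ permE n g :=
  mul_le_mul_of_nonneg_left (Finset.sum_le_sum fun π _ => h π) (by positivity)

lemma permE_const_mul (c : ℝ) (f : Equiv.Perm (Fin n) → ℝ) :
    permE n (fun π => c * f π) = c * permE n f := by
  unfold permE
  rw [← Finset.mul_sum]
  ring

-- descFactorial positivity
lemma descFactorial_cast_pos (hK : K ≤ n) : (0:ℝ) < (n.descFactorial K : ℝ) := by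
  have h0 : n.descFactorial K ≠ 0 := by
    rw [Ne, Nat.descFactorial_eq_zero_iff_lt]
    omega
  exact_mod_cast Nat.pos_of_ne_zero h0

-- row sums of the doubly centered array vanish
lemma sum_dCenter_eq_zero (hK : K ≤ n) (d : (Fin K → Fin n) → (Fin K → Fin n) → ℝ)
    (i : Fin K → Fin n) : ∑ j ∈ injTuples n K, dCenter n K d i j = 0 := by
  have hN : (n.descFactorial K : ℝ) ≠ 0 := (descFactorial_cast_pos hK).ne'
  set N : ℝ := (n.descFactorial K : ℝ) with hNdef
  set U : ℝ := ∑ i' ∈ injTuples n K, ∑ j' ∈ injTuples n K, d i' j' with hU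
  have hcard : ((injTuples n K).card : ℝ) = N := by rw [card_injTuples]
  simp only [dCenter]
  rw [Finset.sum_add_distrib, Finset.sum_sub_distrib, Finset.sum_sub_distrib]
  have t2 : ∑ j ∈ injTuples n K, N⁻¹ * ∑ i' ∈ injTuples n K, d i' j = N⁻¹ * U := by
    rw [← Finset.mul_sum, hU, Finset.sum_comm]
  have t3 : ∑ j ∈ injTuples n K, N⁻¹ * ∑ j' ∈ injTuples n K, d i j'
      = N * (N⁻¹ * ∑ j' ∈ injTuples n K, d i j') := by
    rw [Finset.sum_const, nsmul_eq_mul, hcard]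
  have t4 : ∑ _j ∈ injTuples n K, (N⁻¹) ^ 2 * U = N * ((N⁻¹) ^ 2 * U) := by
    rw [Finset.sum_const, nsmul_eq_mul, hcard]
  rw [t2, t3, t4]
  field_simp
  ring

-- the centered statistic equals the recentered one
lemma gamma_center (hK : K ≤ n) (d : (Fin K → Fin n) → (Fin K → Fin n) → ℝ)
    (π : Equiv.Perm (Fin n)) :
    gammaStat n K d π - permE n (gammaStat n K d) = gammaStat n K (dCenter n K d) π := by
  have hN : (n.descFactorial K : ℝ) ≠ 0 := (descFactorial_cast_pos hK).ne'
  have hfa : ((n.factorial : ℕ) : ℝ) ≠ 0 := by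
    exact_mod_cast (Nat.factorial_pos n).ne'
  set N : ℝ := (n.descFactorial K : ℝ) with hNdef
  set U : ℝ := ∑ i' ∈ injTuples n K, ∑ j' ∈ injTuples n K, d i' j' with hU
  have hcard : ((injTuples n K).card : ℝ) = N := by rw [card_injTuples]
  -- gammaStat of centered array
  have hGc : gammaStat n K (dCenter n K d) π = gammaStat n K d π - N⁻¹ * U := by
    unfold gammaStat
    simp only [dCenter]
    rw [Finset.sum_add_distrib, Finset.sum_sub_distrib, Finset.sum_sub_distrib]
    have t2 : ∑ i ∈ injTuples n K, N⁻¹ * ∑ i' ∈ injTuples n K, d i' (fun s => π (i s))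
        = N⁻¹ * U := by
      rw [← Finset.mul_sum,
        sum_injTuples_perm π (fun j => ∑ i' ∈ injTuples n K, d i' j), hU, Finset.sum_comm]
    have t3 : ∑ i ∈ injTuples n K, N⁻¹ * ∑ j' ∈ injTuples n K, d i j' = N⁻¹ * U := by
      rw [← Finset.mul_sum, hU]
    have t4 : ∑ _i ∈ injTuples n K, (N⁻¹) ^ 2 * U = N * ((N⁻¹) ^ 2 * U) := by
      rw [Finset.sum_const, nsmul_eq_mul, hcard]
    rw [t2, t3, t4]
    have : N * ((N⁻¹) ^ 2 * U) = N⁻¹ * U := by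
      field_simp
    rw [this]
    ring
  -- expectation of gammaStat
  have hE : permE n (gammaStat n K d) = N⁻¹ * U := by
    unfold permE gammaStat
    rw [Finset.sum_comm]
    have : ∀ i ∈ injTuples n K,
        ∑ π : Equiv.Perm (Fin n), d i (fun s => π (i s))
          = ((n - K).factorial : ℝ) * ∑ j ∈ injTuples n K, d i j := fun i hi =>
      sum_perm_comp (mem_injTuples.1 hi) (d i)
    rw [Finset.sum_congr rfl this, ← Finset.mul_sum]
    have hfact : ((n - K).factorial : ℝ) * N = (n.factorial : ℝ) := by
      rw [hNdef]
      exact_mod_cast congrArg (Nat.cast (R := ℝ)) (Nat.factorial_mul_descFactorial hK)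
    rw [← hU]
    field_simp
    linear_combination U * hfact
  rw [hGc, hE]

-- Chebyshev pointwise bound
lemma indicator_le_sq {ε x : ℝ} (hε : 0 < ε) :
    Set.indicator (Set.Ici ε) (fun _ => (1:ℝ)) |x| ≤ ε⁻¹ ^ 2 * x ^ 2 := by
  by_cases h : |x| ∈ Set.Ici ε
  · rw [Set.indicator_of_mem h]
    have h1 : ε ≤ |x| := h
    have h2 : ε ^ 2 ≤ x ^ 2 := by
      nlinarith [abs_nonneg x, sq_abs x]
    have h3 : ε⁻¹ ^ 2 * ε ^ 2 = 1 := by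
      field_simp
    nlinarith [sq_nonneg ε⁻¹, sq_nonneg x, mul_le_mul_of_nonneg_left h2 (sq_nonneg ε⁻¹)]
  · rw [Set.indicator_of_notMem h]
    positivity

-- nat inequality : n^m ≤ 2^m descFactorial
lemma pow_le_two_pow_mul_descFactorial : ∀ m : ℕ, 2 * m ≤ n → n ^ m ≤ 2 ^ m * n.descFactorial m := by
  intro m
  induction m with
  | zero => simp
  | succ m ih =>
    intro h
    have h' : 2 * m ≤ n := by omega
    have hle : n ≤ 2 * (n - m) := by omega
    calc n ^ (m + 1) = n ^ m * n := by ring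
      _ ≤ (2 ^ m * n.descFactorial m) * (2 * (n - m)) :=
          Nat.mul_le_mul (ih h') hle
      _ = 2 ^ (m + 1) * ((n - m) * n.descFactorial m) := by ring
      _ = 2 ^ (m + 1) * n.descFactorial (m + 1) := by
          rw [Nat.descFactorial_succ]

-- the master bound
theorem master (hK1 : 1 ≤ K) (hn : 4 * K ≤ n)
    (d : (Fin K → Fin n) → (Fin K → Fin n) → ℝ) :
    permE n (fun π => ((n.descFactorial K : ℝ)⁻¹ *
        (gammaStat n K d π - permE n (gammaStat n K d))) ^ 2)
      ≤ ((K ^ 2 * 2 ^ (2 * K + 1) : ℕ) : ℝ) *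
        ((((n.descFactorial K : ℝ)⁻¹) ^ 2 *
            ∑ i ∈ injTuples n K, ∑ j ∈ injTuples n K, dCenter n K d i j ^ 2) / n) := by
  have hK : K ≤ n := by omega
  have hNpos : (0:ℝ) < (n.descFactorial K : ℝ) := descFactorial_cast_pos hK
  have hnpos : (0:ℝ) < (n:ℝ) := by
    have : 0 < n := by omega
    exact_mod_cast this
  have hfapos : (0:ℝ) < (n.factorial : ℝ) := by exact_mod_cast Nat.factorial_pos n
  set N : ℝ := (n.descFactorial K : ℝ) with hNdef
  set S : ℝ := ∑ i ∈ injTuples n K, ∑ j ∈ injTuples n K, dCenter n K d i j ^ 2 with hS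
  have hS0 : 0 ≤ S := Finset.sum_nonneg fun i _ => Finset.sum_nonneg fun j _ => sq_nonneg _
  -- rewrite via gamma_center
  have h1 : permE n (fun π => ((n.descFactorial K : ℝ)⁻¹ *
      (gammaStat n K d π - permE n (gammaStat n K d))) ^ 2)
      = (N⁻¹) ^ 2 * ((n.factorial : ℝ)⁻¹ *
          ∑ π : Equiv.Perm (Fin n), (gammaStat n K (dCenter n K d) π) ^ 2) := by
    have hfun : (fun π : Equiv.Perm (Fin n) =>
        ((n.descFactorial K : ℝ)⁻¹ *
          (gammaStat n K d π - permE n (gammaStat n K d))) ^ 2)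
        = fun π => (N⁻¹) ^ 2 * (gammaStat n K (dCenter n K d) π) ^ 2 := by
      funext π
      rw [gamma_center hK d π, mul_pow]
    rw [hfun, permE_const_mul]
    unfold permE
    rfl
  rw [h1]
  -- apply var_bound
  have h2 : ∑ π : Equiv.Perm (Fin n), (gammaStat n K (dCenter n K d) π) ^ 2
      ≤ (((n - K).factorial : ℝ) + ((n - 2 * K).factorial : ℝ) * N)
        * ((K ^ 2 * n ^ (K - 1) : ℕ) : ℝ) * S :=
    var_bound (dCenter n K d) (sum_dCenter_eq_zero hK d)
  -- natural number inequality
  have hnK : n ^ K = n * n ^ (K - 1) := by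
    conv_lhs => rw [show K = 1 + (K - 1) by omega]
    rw [pow_add, pow_one]
  have e1 : (n - K).factorial * n.descFactorial K = n.factorial :=
    Nat.factorial_mul_descFactorial hK
  have e2 : (n - 2 * K).factorial * n.descFactorial (2 * K) = n.factorial :=
    Nat.factorial_mul_descFactorial (by omega)
  have p1 : n ^ K ≤ 2 ^ K * n.descFactorial K :=
    pow_le_two_pow_mul_descFactorial K (by omega)
  have p2 : n ^ (2 * K) ≤ 2 ^ (2 * K) * n.descFactorial (2 * K) :=
    pow_le_two_pow_mul_descFactorial (2 * K) (by omega)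
  have p3 : n.descFactorial K ≤ n ^ K := Nat.descFactorial_le_pow n K
  have A1 : n * ((n - K).factorial * (K ^ 2 * n ^ (K - 1)))
      ≤ K ^ 2 * 2 ^ K * n.factorial := by
    calc n * ((n - K).factorial * (K ^ 2 * n ^ (K - 1)))
        = K ^ 2 * ((n - K).factorial * (n * n ^ (K - 1))) := by ring
      _ = K ^ 2 * ((n - K).factorial * n ^ K) := by rw [← hnK]
      _ ≤ K ^ 2 * ((n - K).factorial * (2 ^ K * n.descFactorial K)) :=
          Nat.mul_le_mul_left _ (Nat.mul_le_mul_left _ p1)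
      _ = K ^ 2 * 2 ^ K * ((n - K).factorial * n.descFactorial K) := by ring
      _ = K ^ 2 * 2 ^ K * n.factorial := by rw [e1]
  have A2 : n * ((n - 2 * K).factorial * (n.descFactorial K * (K ^ 2 * n ^ (K - 1))))
      ≤ K ^ 2 * 2 ^ (2 * K) * n.factorial := by
    calc n * ((n - 2 * K).factorial * (n.descFactorial K * (K ^ 2 * n ^ (K - 1))))
        = K ^ 2 * ((n - 2 * K).factorial * (n.descFactorial K * (n * n ^ (K - 1)))) := by
          ring
      _ = K ^ 2 * ((n - 2 * K).factorial * (n.descFactorial K * n ^ K)) := by rw [← hnK]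
      _ ≤ K ^ 2 * ((n - 2 * K).factorial * (n ^ K * n ^ K)) :=
          Nat.mul_le_mul_left _ (Nat.mul_le_mul_left _ (Nat.mul_le_mul_right _ p3))
      _ = K ^ 2 * ((n - 2 * K).factorial * n ^ (2 * K)) := by
          rw [show n ^ K * n ^ K = n ^ (2 * K) by rw [← pow_add]; ring_nf]
      _ ≤ K ^ 2 * ((n - 2 * K).factorial * (2 ^ (2 * K) * n.descFactorial (2 * K))) :=
          Nat.mul_le_mul_left _ (Nat.mul_le_mul_left _ p2)
      _ = K ^ 2 * 2 ^ (2 * K) * ((n - 2 * K).factorial * n.descFactorial (2 * K)) := by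
          ring
      _ = K ^ 2 * 2 ^ (2 * K) * n.factorial := by rw [e2]
  have h2k : (2:ℕ) ^ K ≤ 2 ^ (2 * K) := Nat.pow_le_pow_right (by norm_num) (by omega)
  have natkey : n * ((n - K).factorial * (K ^ 2 * n ^ (K - 1)))
        + n * ((n - 2 * K).factorial * (n.descFactorial K * (K ^ 2 * n ^ (K - 1))))
      ≤ K ^ 2 * 2 ^ (2 * K + 1) * n.factorial := by
    have hsum := Nat.add_le_add A1 A2
    have : K ^ 2 * 2 ^ K * n.factorial + K ^ 2 * 2 ^ (2 * K) * n.factorial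
        ≤ K ^ 2 * 2 ^ (2 * K + 1) * n.factorial := by
      have : K ^ 2 * 2 ^ K * n.factorial ≤ K ^ 2 * 2 ^ (2 * K) * n.factorial :=
        Nat.mul_le_mul_right _ (Nat.mul_le_mul_left _ h2k)
      calc K ^ 2 * 2 ^ K * n.factorial + K ^ 2 * 2 ^ (2 * K) * n.factorial
          ≤ K ^ 2 * 2 ^ (2 * K) * n.factorial + K ^ 2 * 2 ^ (2 * K) * n.factorial :=
            Nat.add_le_add_right this _
        _ = K ^ 2 * 2 ^ (2 * K + 1) * n.factorial := by ring
    omega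
  -- scalar inequality over ℝ
  have key : ((n.factorial : ℝ))⁻¹ *
      ((((n - K).factorial : ℝ) + ((n - 2 * K).factorial : ℝ) * N)
        * ((K ^ 2 * n ^ (K - 1) : ℕ) : ℝ))
      ≤ ((K ^ 2 * 2 ^ (2 * K + 1) : ℕ) : ℝ) / n := by
    have hcross : ((((n - K).factorial : ℝ) + ((n - 2 * K).factorial : ℝ) * N)
          * ((K ^ 2 * n ^ (K - 1) : ℕ) : ℝ)) * (n : ℝ)
        ≤ ((K ^ 2 * 2 ^ (2 * K + 1) : ℕ) : ℝ) * (n.factorial : ℝ) := by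
      have := natkey
      have hc : ((n * ((n - K).factorial * (K ^ 2 * n ^ (K - 1)))
            + n * ((n - 2 * K).factorial * (n.descFactorial K * (K ^ 2 * n ^ (K - 1)))) : ℕ) : ℝ)
          ≤ ((K ^ 2 * 2 ^ (2 * K + 1) * n.factorial : ℕ) : ℝ) := by exact_mod_cast this
      push_cast at hc
      rw [hNdef]
      push_cast
      nlinarith [hc]
    calc ((n.factorial : ℝ))⁻¹ *
        ((((n - K).factorial : ℝ) + ((n - 2 * K).factorial : ℝ) * N)
          * ((K ^ 2 * n ^ (K - 1) : ℕ) : ℝ))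
        = ((((n - K).factorial : ℝ) + ((n - 2 * K).factorial : ℝ) * N)
            * ((K ^ 2 * n ^ (K - 1) : ℕ) : ℝ)) / (n.factorial : ℝ) := by ring
      _ ≤ ((K ^ 2 * 2 ^ (2 * K + 1) : ℕ) : ℝ) / n :=
          (div_le_div_iff₀ hfapos hnpos).mpr hcross
  -- conclude
  have step1 : (N⁻¹) ^ 2 * ((n.factorial : ℝ)⁻¹ *
      ∑ π : Equiv.Perm (Fin n), (gammaStat n K (dCenter n K d) π) ^ 2)
      ≤ (N⁻¹) ^ 2 * ((n.factorial : ℝ)⁻¹ *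
          ((((n - K).factorial : ℝ) + ((n - 2 * K).factorial : ℝ) * N)
            * ((K ^ 2 * n ^ (K - 1) : ℕ) : ℝ) * S)) := by
    apply mul_le_mul_of_nonneg_left _ (by positivity)
    exact mul_le_mul_of_nonneg_left h2 (by positivity)
  refine step1.trans ?_
  have step2 : (N⁻¹) ^ 2 * ((n.factorial : ℝ)⁻¹ *
      ((((n - K).factorial : ℝ) + ((n - 2 * K).factorial : ℝ) * N)
        * ((K ^ 2 * n ^ (K - 1) : ℕ) : ℝ) * S))
      = ((N⁻¹) ^ 2 * S) * ((n.factorial : ℝ)⁻¹ *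
          ((((n - K).factorial : ℝ) + ((n - 2 * K).factorial : ℝ) * N)
            * ((K ^ 2 * n ^ (K - 1) : ℕ) : ℝ))) := by ring
  rw [step2]
  calc ((N⁻¹) ^ 2 * S) * ((n.factorial : ℝ)⁻¹ *
        ((((n - K).factorial : ℝ) + ((n - 2 * K).factorial : ℝ) * N)
          * ((K ^ 2 * n ^ (K - 1) : ℕ) : ℝ)))
      ≤ ((N⁻¹) ^ 2 * S) * (((K ^ 2 * 2 ^ (2 * K + 1) : ℕ) : ℝ) / n) :=
        mul_le_mul_of_nonneg_left key (by positivity)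
    _ = ((K ^ 2 * 2 ^ (2 * K + 1) : ℕ) : ℝ) * (((N⁻¹) ^ 2 * S) / n) := by ring



end Helpers

open Asymptotics in
/-- Lemma C.8 of the paper, WLLN for `K`-indexed permutation
statistics: (i) if `(n)_K⁻² ΣΣ d̃² = o(n)` then `(n)_K⁻¹ (Γ − E[Γ]) → 0` in
probability under the uniform random permutation; (ii) for product arrays, if
`n⁻¹ [(n)_K⁻¹ Σ ã²][(n)_K⁻¹ Σ b̃²] → 0` then `U_n − E[U_n] → 0` in probability. -/
theorem statement_17 (K : ℕ) (hK : 1 ≤ K) :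
    (∀ d : (n : ℕ) → (Fin K → Fin n) → (Fin K → Fin n) → ℝ,
      ((fun n : ℕ => ((n.descFactorial K : ℝ)⁻¹) ^ 2 *
          ∑ i ∈ injTuples n K, ∑ j ∈ injTuples n K, dCenter n K (d n) i j ^ 2)
        =o[atTop] fun n : ℕ => (n : ℝ)) →
      ∀ ε : ℝ, 0 < ε →
        Tendsto
          (fun n : ℕ =>
            permE n (fun π =>
              Set.indicator (Set.Ici ε) (fun _ => (1 : ℝ))
                |(n.descFactorial K : ℝ)⁻¹ *
                  (gammaStat n K (d n) π - permE n (gammaStat n K (d n)))|))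
          atTop (𝓝 0)) ∧
    (∀ a b : (n : ℕ) → (Fin K → Fin n) → ℝ,
      Tendsto
        (fun n : ℕ =>
          (n : ℝ)⁻¹ *
            (((n.descFactorial K : ℝ)⁻¹ *
                ∑ i ∈ injTuples n K, aCenter n K (a n) i ^ 2) *
              ((n.descFactorial K : ℝ)⁻¹ *
                ∑ i ∈ injTuples n K, aCenter n K (b n) i ^ 2)))
        atTop (𝓝 0) →
      ∀ ε : ℝ, 0 < ε →
        Tendsto
          (fun n : ℕ =>
            permE n (fun π =>
              Set.indicator (Set.Ici ε) (fun _ => (1 : ℝ))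
                |UnStat n K (a n) (b n) π - permE n (UnStat n K (a n) (b n))|))
          atTop (𝓝 0)) := by
  have main : ∀ d : (n : ℕ) → (Fin K → Fin n) → (Fin K → Fin n) → ℝ,
      ((fun n : ℕ => ((n.descFactorial K : ℝ)⁻¹) ^ 2 *
          ∑ i ∈ injTuples n K, ∑ j ∈ injTuples n K, dCenter n K (d n) i j ^ 2)
        =o[atTop] fun n : ℕ => (n : ℝ)) →
      ∀ ε : ℝ, 0 < ε →
        Tendsto
          (fun n : ℕ =>
            permE n (fun π =>
              Set.indicator (Set.Ici ε) (fun _ => (1 : ℝ))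
                |(n.descFactorial K : ℝ)⁻¹ *
                  (gammaStat n K (d n) π - permE n (gammaStat n K (d n)))|))
          atTop (𝓝 0) := by
    intro d ho ε hε
    set A : ℕ → ℝ := fun n => ((n.descFactorial K : ℝ)⁻¹) ^ 2 *
        ∑ i ∈ injTuples n K, ∑ j ∈ injTuples n K, dCenter n K (d n) i j ^ 2 with hA
    have hAt : Tendsto (fun n : ℕ => A n / (n : ℝ)) atTop (𝓝 0) :=
      ho.tendsto_div_nhds_zero
    have hg : Tendsto (fun n : ℕ =>
        (ε⁻¹ ^ 2 * ((K ^ 2 * 2 ^ (2 * K + 1) : ℕ) : ℝ)) * (A n / (n : ℝ)))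
        atTop (𝓝 0) := by
      have h := hAt.const_mul (ε⁻¹ ^ 2 * ((K ^ 2 * 2 ^ (2 * K + 1) : ℕ) : ℝ))
      rw [mul_zero] at h
      exact h
    apply squeeze_zero' ?_ ?_ hg
    · exact Filter.Eventually.of_forall fun n =>
        permE_nonneg fun π => Set.indicator_nonneg (fun _ _ => zero_le_one) _
    · filter_upwards [eventually_ge_atTop (4 * K)] with n hn
      have step1 : permE n (fun π =>
          Set.indicator (Set.Ici ε) (fun _ => (1 : ℝ))
            |(n.descFactorial K : ℝ)⁻¹ *
              (gammaStat n K (d n) π - permE n (gammaStat n K (d n)))|)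
          ≤ permE n (fun π => ε⁻¹ ^ 2 *
              ((n.descFactorial K : ℝ)⁻¹ *
                (gammaStat n K (d n) π - permE n (gammaStat n K (d n)))) ^ 2) :=
        permE_mono fun π => indicator_le_sq hε
      have step2 := master hK hn (d n)
      calc permE n (fun π =>
            Set.indicator (Set.Ici ε) (fun _ => (1 : ℝ))
              |(n.descFactorial K : ℝ)⁻¹ *
                (gammaStat n K (d n) π - permE n (gammaStat n K (d n)))|)
          ≤ ε⁻¹ ^ 2 * permE n (fun π =>
              ((n.descFactorial K : ℝ)⁻¹ *
                (gammaStat n K (d n) π - permE n (gammaStat n K (d n)))) ^ 2) := by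
            rw [← permE_const_mul]
            exact step1
        _ ≤ ε⁻¹ ^ 2 * (((K ^ 2 * 2 ^ (2 * K + 1) : ℕ) : ℝ) * (A n / (n : ℝ))) :=
            mul_le_mul_of_nonneg_left step2 (by positivity)
        _ = (ε⁻¹ ^ 2 * ((K ^ 2 * 2 ^ (2 * K + 1) : ℕ) : ℝ)) * (A n / (n : ℝ)) := by ring
  refine ⟨main, ?_⟩
  intro a b hto ε hε
  have hprod : ∀ n (i j : Fin K → Fin n),
      dCenter n K (fun i' j' => a n i' * b n j') i j
        = aCenter n K (a n) i * aCenter n K (b n) j := by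
    intro n i j
    have e1 : ∑ i' ∈ injTuples n K, a n i' * b n j
        = (∑ i' ∈ injTuples n K, a n i') * b n j := by rw [Finset.sum_mul]
    have e2 : ∑ j' ∈ injTuples n K, a n i * b n j'
        = a n i * ∑ j' ∈ injTuples n K, b n j' := by rw [Finset.mul_sum]
    have e3 : ∑ i' ∈ injTuples n K, ∑ j' ∈ injTuples n K, a n i' * b n j'
        = (∑ i' ∈ injTuples n K, a n i') * ∑ j' ∈ injTuples n K, b n j' := by
      rw [Finset.sum_mul_sum]
    simp only [dCenter, aCenter]
    rw [e1, e2, e3]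
    ring
  have hsq : ∀ n : ℕ,
      ∑ i ∈ injTuples n K, ∑ j ∈ injTuples n K,
          dCenter n K (fun i' j' => a n i' * b n j') i j ^ 2
        = (∑ i ∈ injTuples n K, aCenter n K (a n) i ^ 2)
            * ∑ j ∈ injTuples n K, aCenter n K (b n) j ^ 2 := by
    intro n
    rw [Finset.sum_mul_sum]
    apply Finset.sum_congr rfl
    intro i _
    apply Finset.sum_congr rfl
    intro j _
    rw [hprod n i j, mul_pow]
  have ho : (fun n : ℕ => ((n.descFactorial K : ℝ)⁻¹) ^ 2 *
      ∑ i ∈ injTuples n K, ∑ j ∈ injTuples n K,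
        dCenter n K (fun i' j' => a n i' * b n j') i j ^ 2)
      =o[atTop] fun n : ℕ => (n : ℝ) := by
    rw [Asymptotics.isLittleO_iff_tendsto]
    · have hfun : ∀ n : ℕ, (((n.descFactorial K : ℝ)⁻¹) ^ 2 *
          ∑ i ∈ injTuples n K, ∑ j ∈ injTuples n K,
            dCenter n K (fun i' j' => a n i' * b n j') i j ^ 2) / (n : ℝ)
          = (n : ℝ)⁻¹ *
              (((n.descFactorial K : ℝ)⁻¹ *
                  ∑ i ∈ injTuples n K, aCenter n K (a n) i ^ 2) *
                ((n.descFactorial K : ℝ)⁻¹ *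
                  ∑ i ∈ injTuples n K, aCenter n K (b n) i ^ 2)) := by
        intro n
        rw [hsq n]
        ring
      rw [show (fun n : ℕ => (((n.descFactorial K : ℝ)⁻¹) ^ 2 *
          ∑ i ∈ injTuples n K, ∑ j ∈ injTuples n K,
            dCenter n K (fun i' j' => a n i' * b n j') i j ^ 2) / (n : ℝ))
          = fun n : ℕ => (n : ℝ)⁻¹ *
              (((n.descFactorial K : ℝ)⁻¹ *
                  ∑ i ∈ injTuples n K, aCenter n K (a n) i ^ 2) *
                ((n.descFactorial K : ℝ)⁻¹ *
                  ∑ i ∈ injTuples n K, aCenter n K (b n) i ^ 2))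
        from funext hfun]
      exact hto
    · intro n hn
      have hn0 : n = 0 := by exact_mod_cast hn
      subst hn0
      have : (Nat.descFactorial 0 K : ℝ) = 0 := by
        have : Nat.descFactorial 0 K = 0 := Nat.descFactorial_eq_zero_iff_lt.mpr (by omega)
        exact_mod_cast this
      rw [this]
      simp
  have hcons := main (fun n i j => a n i * b n j) ho ε hε
  have hUn : ∀ (n : ℕ) (π : Equiv.Perm (Fin n)),
      UnStat n K (a n) (b n) π - permE n (UnStat n K (a n) (b n))
        = (n.descFactorial K : ℝ)⁻¹ *
            (gammaStat n K (fun i j => a n i * b n j) π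
              - permE n (gammaStat n K (fun i j => a n i * b n j))) := by
    intro n π
    have h1 : UnStat n K (a n) (b n)
        = fun π => (n.descFactorial K : ℝ)⁻¹ *
            gammaStat n K (fun i j => a n i * b n j) π := rfl
    rw [h1, permE_const_mul]
    ring
  have hfin : (fun n : ℕ =>
      permE n (fun π =>
        Set.indicator (Set.Ici ε) (fun _ => (1 : ℝ))
          |UnStat n K (a n) (b n) π - permE n (UnStat n K (a n) (b n))|))
      = fun n : ℕ =>
        permE n (fun π =>
          Set.indicator (Set.Ici ε) (fun _ => (1 : ℝ))
            |(n.descFactorial K : ℝ)⁻¹ *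
              (gammaStat n K (fun i j => a n i * b n j) π
                - permE n (gammaStat n K (fun i j => a n i * b n j)))|) := by
    funext n
    exact congrArg (permE n) (funext fun π => by rw [hUn n π])
  rw [hfin]
  exact hcons


end QAPPaper
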